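/- arXiv:1507.05554 — 4 statements merged into one kernel-verified Lean document; each statement's English description precedes it below -/
import Mathlib

section
/- If C is a 3×3 real matrix with C⁻¹ = I Cᵀ I (I = diag(-1,1,1)), c₁₁ > 1, c₁₂ = c₂₁, and c₁₃ = c₃₁, then c₂₃ = c₃₂, i.e. C is symmetric. -/
open Matrix
noncomputable def Imat : Matrix (Fin 3) (Fin 3) ℝ := diagonal ![-1, 1, 1]
noncomputable def amat : Matrix (Fin 3) (Fin 3) ℝ := !![0,1,0; 1,0,0; 0,0,0]
noncomputable def bmat : Matrix (Fin 3) (Fin 3) ℝ := !![0,0,1; 0,0,0; 1,0,0]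
noncomputable def cmat : Matrix (Fin 3) (Fin 3) ℝ := !![0,0,0; 0,0,-1; 0,1,0]
noncomputable def rot2 (η : ℝ) : Matrix (Fin 2) (Fin 2) ℝ :=
  !![Real.cos η, -Real.sin η; Real.sin η, Real.cos η]
noncomputable def Kmat (η : ℝ) : Matrix (Fin 3) (Fin 3) ℝ :=
  !![1,0,0; 0,Real.cos η,-Real.sin η; 0,Real.sin η,Real.cos η]
def inSO21 (C : Matrix (Fin 3) (Fin 3) ℝ) : Prop :=
  C⁻¹ = Imat * Cᵀ * Imat ∧ C.det = 1 ∧ 1 ≤ C 0 0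

/-!
Proof idea: `C⁻¹ = I Cᵀ I` says that both the rows and the columns of `C` are orthonormal for the
form `-x₀y₀ + x₁y₁ + x₂y₂`. Since the first row and the first column of `C` coincide, orthogonality
of row 0 to row 1 and of column 0 to column 1 differ only in the term `c₀₂ c₁₂` versus `c₀₂ c₂₁`,
so `c₀₂ (c₁₂ - c₂₁) = 0`; likewise `c₀₁ (c₁₂ - c₂₁) = 0`. Finally `c₀₁` and `c₀₂` cannot both
vanish, because the first row has norm `-c₀₀² + c₀₁² + c₀₂² = -1` and `c₀₀ > 1`.
-/

theorem mul_mul_transpose_eq_and_transpose_mul_mul_eq {n R : Type*} [Fintype n] [DecidableEq n]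
    [CommRing R] {η C : Matrix n n R} (hη : η * η = 1) (hunit : IsUnit C.det)
    (hinv : C⁻¹ = η * Cᵀ * η) :
    C * η * Cᵀ = η ∧ Cᵀ * η * C = η := by
  have hright : C * (η * Cᵀ * η) = 1 := hinv ▸ mul_nonsing_inv C hunit
  have hleft : η * Cᵀ * η * C = 1 := hinv ▸ nonsing_inv_mul C hunit
  constructor
  · calc C * η * Cᵀ = C * (η * Cᵀ * η) * η := by simp only [Matrix.mul_assoc, hη, Matrix.mul_one]
      _ = η := by rw [hright, Matrix.one_mul]
  · calc Cᵀ * η * C = η * (η * Cᵀ * η * C) := by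
          simp only [← Matrix.mul_assoc, hη, Matrix.one_mul]
      _ = η := by rw [hleft, Matrix.mul_one]

theorem Imat_mul_Imat : Imat * Imat = 1 := by
  rw [Imat, diagonal_mul_diagonal, ← diagonal_one]
  congr 1
  ext i
  fin_cases i <;> norm_num

theorem mul_Imat_mul_transpose_apply (C : Matrix (Fin 3) (Fin 3) ℝ) (i j : Fin 3) :
    (C * Imat * Cᵀ) i j = -(C i 0 * C j 0) + C i 1 * C j 1 + C i 2 * C j 2 := by
  simp [Imat, mul_apply, Fin.sum_univ_three]

theorem transpose_mul_Imat_mul_apply (C : Matrix (Fin 3) (Fin 3) ℝ) (i j : Fin 3) :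
    (Cᵀ * Imat * C) i j = -(C 0 i * C 0 j) + C 1 i * C 1 j + C 2 i * C 2 j := by
  simpa using mul_Imat_mul_transpose_apply Cᵀ i j

theorem transpose_eq_self_of_fin_three {R : Type*} {C : Matrix (Fin 3) (Fin 3) R}
    (h01 : C 0 1 = C 1 0) (h02 : C 0 2 = C 2 0) (h12 : C 1 2 = C 2 1) : Cᵀ = C := by
  ext i j
  fin_cases i <;> fin_cases j <;> simp [h01, h02, h12]

theorem stmt5 (C : Matrix (Fin 3) (Fin 3) ℝ) (hunit : IsUnit C.det)
    (hps : C⁻¹ = Imat * Cᵀ * Imat) (h11 : 1 < C 0 0)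
    (h12 : C 0 1 = C 1 0) (h13 : C 0 2 = C 2 0) :
    C 1 2 = C 2 1 ∧ Cᵀ = C := by
  obtain ⟨hrows, hcols⟩ :=
    mul_mul_transpose_eq_and_transpose_mul_mul_eq Imat_mul_Imat hunit hps
  have row00 := congr_fun₂ hrows 0 0
  have row01 := congr_fun₂ hrows 0 1
  have row02 := congr_fun₂ hrows 0 2
  have col01 := congr_fun₂ hcols 0 1
  have col02 := congr_fun₂ hcols 0 2
  simp only [mul_Imat_mul_transpose_apply, transpose_mul_Imat_mul_apply, ← h12, ← h13]
    at row00 row01 row02 col01 col02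
  norm_num [Imat] at row00 row01 row02 col01 col02
  have h2 : C 0 2 * (C 1 2 - C 2 1) = 0 := by linear_combination row01 - col01
  have h1 : C 0 1 * (C 1 2 - C 2 1) = 0 := by linear_combination col02 - row02
  have hne : C 0 1 ≠ 0 ∨ C 0 2 ≠ 0 := by
    by_contra! h
    rw [h.1, h.2] at row00
    nlinarith
  have hsymm : C 1 2 = C 2 1 := by
    rcases hne with h | h
    · exact sub_eq_zero.mp ((mul_eq_zero.mp h1).resolve_left h)
    · exact sub_eq_zero.mp ((mul_eq_zero.mp h2).resolve_left h)
  exact ⟨hsymm, transpose_eq_self_of_fin_three h12 h13 hsymm⟩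
end

section
/- For any matrix C ∈ SO₀(2,1) with c₁₁ > 1, there exists a unique 2×2 rotation matrix R(η) = ![![cos η, -sin η],![sin η, cos η]] such that the vector (c₂₁, c₃₁)ᵀ equals R(η) applied to (c₁₂, c₁₃)ᵀ; consequently C = s₁ k₁ with k₁ = 1 ⊕ R(η) and s₁ = C k₁⁻¹ symmetric. -/
open Matrix
lemma Kmul (η : ℝ) : Kmat η * Kmat (-η) = 1 := by
  ext i j
  fin_cases i <;> fin_cases j <;>
    simp [Kmat, Matrix.mul_apply, Fin.sum_univ_three, Real.cos_neg, Real.sin_neg,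
      Matrix.vecHead, Matrix.vecTail] <;>
    nlinarith [Real.cos_sq_add_sin_sq η]

lemma Kinv (η : ℝ) : (Kmat η)⁻¹ = Kmat (-η) :=
  inv_eq_right_inv (Kmul η)

lemma exists_cos_sin (c s : ℝ) (h : c ^ 2 + s ^ 2 = 1) :
    ∃ η : ℝ, Real.cos η = c ∧ Real.sin η = s := by
  have habs : ‖(⟨c, s⟩ : ℂ)‖ = 1 := by
    rw [Complex.norm_def, Complex.normSq_mk, show c * c + s * s = 1 by nlinarith, Real.sqrt_one]
  have hz : (⟨c, s⟩ : ℂ) ≠ 0 := by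
    intro h0; rw [h0] at habs; simp at habs
  refine ⟨Complex.arg ⟨c, s⟩, ?_, ?_⟩
  · rw [Complex.cos_arg hz, habs]; simp
  · rw [Complex.sin_arg, habs]; simp

lemma sym_lemma (C : Matrix (Fin 3) (Fin 3) ℝ) (η' c s : ℝ)
    (hc' : Real.cos η' = c) (hs' : Real.sin η' = s)
    (hpa : C 1 0 = c * C 0 1 - s * C 0 2)
    (hqa : C 2 0 = s * C 0 1 + c * C 0 2)
    (key : s * (C 1 1 + C 2 2) = c * (C 2 1 - C 1 2)) :
    (C * Kmat (-η'))ᵀ = C * Kmat (-η') := by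
  ext i j
  fin_cases i <;> fin_cases j <;>
    simp [Kmat, Matrix.mul_apply, Matrix.transpose_apply, Fin.sum_univ_three,
      Real.cos_neg, Real.sin_neg, hc', hs', Matrix.vecHead, Matrix.vecTail] <;>
    linarith [hpa, hqa, key]

lemma cs_props (t a b p q A B D E : ℝ)
    (hr2 : a ^ 2 + b ^ 2 = t ^ 2 - 1) (hr2' : p ^ 2 + q ^ 2 = t ^ 2 - 1)
    (hne : a ^ 2 + b ^ 2 ≠ 0)
    (e01 : -(t * p) + a * A + b * B = 0)
    (e02 : -(t * q) + a * D + b * E = 0)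
    (f01 : -(q * D) + (-(p * A) + t * a) = 0)
    (f02 : -(q * E) + (-(p * B) + t * b) = 0) :
    ∃ c s : ℝ, c ^ 2 + s ^ 2 = 1 ∧ p = c * a - s * b ∧ q = s * a + c * b ∧
      s * (A + E) = c * (D - B) := by
  refine ⟨(p * a + q * b) / (a ^ 2 + b ^ 2), (q * a - p * b) / (a ^ 2 + b ^ 2), ?_, ?_, ?_, ?_⟩
  · field_simp; nlinarith [hr2, hr2']
  · field_simp; ring
  · field_simp; ring
  · field_simp
    linear_combination q * e01 - p * e02 + b * f01 - a * f02

theorem stmt8 (C : Matrix (Fin 3) (Fin 3) ℝ) (hC : inSO21 C) (h11 : 1 < C 0 0) :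
    ∃! R : Matrix (Fin 2) (Fin 2) ℝ,
      (∃ η : ℝ, R = rot2 η) ∧
      (![C 1 0, C 2 0] = R.mulVec ![C 0 1, C 0 2]) ∧
      (∀ η : ℝ, R = rot2 η →
        (C * (Kmat η)⁻¹)ᵀ = C * (Kmat η)⁻¹ ∧ C = (C * (Kmat η)⁻¹) * Kmat η) := by
  have hdet : IsUnit C.det := by rw [hC.2.1]; exact isUnit_one
  have h1 : C * (Imat * Cᵀ * Imat) = 1 := by rw [← hC.1]; exact mul_nonsing_inv C hdet
  have h2 : (Imat * Cᵀ * Imat) * C = 1 := by rw [← hC.1]; exact nonsing_inv_mul C hdet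
  have e00 := congrFun (congrFun h1 0) 0
  have e01 := congrFun (congrFun h1 0) 1
  have e02 := congrFun (congrFun h1 0) 2
  have f00 := congrFun (congrFun h2 0) 0
  have f01 := congrFun (congrFun h2 0) 1
  have f02 := congrFun (congrFun h2 0) 2
  simp [Imat, Matrix.mul_apply, Fin.sum_univ_three, Matrix.diagonal, Matrix.one_apply,
    Matrix.vecHead, Matrix.vecTail] at e00 e01 e02 f00 f01 f02
  clear h1 h2 hdet
  have hr2 : C 0 1 ^ 2 + C 0 2 ^ 2 = C 0 0 ^ 2 - 1 := by nlinarith [e00]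
  have hr2' : C 1 0 ^ 2 + C 2 0 ^ 2 = C 0 0 ^ 2 - 1 := by nlinarith [f00]
  have hr2pos : (0:ℝ) < C 0 1 ^ 2 + C 0 2 ^ 2 := by nlinarith
  have hr2ne : C 0 1 ^ 2 + C 0 2 ^ 2 ≠ 0 := ne_of_gt hr2pos
  have e01' : -(C 0 0 * C 1 0) + C 0 1 * C 1 1 + C 0 2 * C 1 2 = 0 := by linear_combination e01
  have e02' : -(C 0 0 * C 2 0) + C 0 1 * C 2 1 + C 0 2 * C 2 2 = 0 := by linear_combination e02
  have f01' : -(C 2 0 * C 2 1) + (-(C 1 0 * C 1 1) + C 0 0 * C 0 1) = 0 := by linear_combination f01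
  have f02' : -(C 2 0 * C 2 2) + (-(C 1 0 * C 1 2) + C 0 0 * C 0 2) = 0 := by linear_combination f02
  obtain ⟨c, s, hcs, hpa, hqa, key⟩ :=
    cs_props (C 0 0) (C 0 1) (C 0 2) (C 1 0) (C 2 0) (C 1 1) (C 1 2) (C 2 1) (C 2 2)
      hr2 hr2' hr2ne (by linear_combination e01') (by linear_combination e02')
      (by linear_combination f01') (by linear_combination f02')
  obtain ⟨η, hcos, hsin⟩ := exists_cos_sin c s hcs
  refine ⟨rot2 η, ⟨⟨η, rfl⟩, ?_, ?_⟩, ?_⟩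
  · funext i
    fin_cases i <;>
      simp [rot2, Matrix.mulVec, dotProduct, Fin.sum_univ_two, hcos, hsin,
        Matrix.vecHead, Matrix.vecTail] <;>
      [linarith [hpa]; linarith [hqa]]
  · intro η' hη'
    have hc' : Real.cos η' = c := by
      have := congrFun (congrFun hη' 0) 0
      simpa [rot2, hcos] using this.symm
    have hs' : Real.sin η' = s := by
      have := congrFun (congrFun hη' 1) 0
      simpa [rot2, hsin] using this.symm
    rw [Kinv η']
    refine ⟨sym_lemma C η' c s hc' hs' hpa hqa key, ?_⟩
    rw [Matrix.mul_assoc]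
    have hone : Kmat (-η') * Kmat η' = 1 := by
      have := Kmul (-η'); rwa [neg_neg] at this
    rw [hone, Matrix.mul_one]
  · intro R ⟨⟨η'', hR⟩, hmv, _⟩
    subst hR
    have g0 := congrFun hmv 0
    have g1 := congrFun hmv 1
    simp [rot2, Matrix.mulVec, dotProduct, Fin.sum_univ_two,
      Matrix.vecHead, Matrix.vecTail] at g0 g1
    have hu : C 0 1 * (Real.cos η'' - c) - C 0 2 * (Real.sin η'' - s) = 0 := by
      linear_combination hpa - g0
    have hv : C 0 1 * (Real.sin η'' - s) + C 0 2 * (Real.cos η'' - c) = 0 := by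
      linear_combination hqa - g1
    have hx : (C 0 1 ^ 2 + C 0 2 ^ 2) * (Real.cos η'' - c) = 0 := by
      linear_combination C 0 1 * hu + C 0 2 * hv
    have hy : (C 0 1 ^ 2 + C 0 2 ^ 2) * (Real.sin η'' - s) = 0 := by
      linear_combination C 0 1 * hv - C 0 2 * hu
    have hgx : Real.cos η'' = c := by
      rcases mul_eq_zero.mp hx with h | h
      · exact absurd h hr2ne
      · linarith
    have hgy : Real.sin η'' = s := by
      rcases mul_eq_zero.mp hy with h | h
      · exact absurd h hr2ne
      · linarith
    rw [rot2, rot2, hgx, hgy, hcos, hsin]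
end

section
/- For any matrix C ∈ SO₀(2,1), one has (c₂₂ + c₃₃)² + (c₃₂ − c₂₃)² = (1 + c₁₁)². -/
/-!
Since `det C = 1`, `C⁻¹` is the adjugate of `C`, so the top-left entry of `C⁻¹ = I Cᵀ I` reads
`c₂₂c₃₃ - c₂₃c₃₂ = c₁₁`. Expanding the squares, it remains to show
`c₂₂² + c₃₂² + c₂₃² + c₃₃² = 1 + c₁₁²`, which is the sum of the diagonal entries 2 and 3 of
`Cᵀ I C = I` and the first diagonal entry of `C I Cᵀ = I`.
-/

open Matrix
theorem Matrix.adjugate_eq_inv_of_det_eq_one {n R : Type*} [Fintype n] [DecidableEq n] [CommRing R]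
    {A : Matrix n n R} (h : A.det = 1) : A.adjugate = A⁻¹ := by
  rw [inv_def, h, Ring.inverse_one, one_smul]

section

variable {n R : Type*} [Fintype n] [DecidableEq n] [CommRing R] {A J : Matrix n n R}

theorem Matrix.transpose_mul_mul_self_of_inv_eq (hJ : J * J = 1) (hA : IsUnit A.det)
    (h : A⁻¹ = J * Aᵀ * J) : Aᵀ * J * A = J := by
  have := nonsing_inv_mul A hA
  rw [h] at this
  calc Aᵀ * J * A = J * (J * Aᵀ * J * A) := by simp only [← Matrix.mul_assoc, hJ, Matrix.one_mul]
    _ = J := by rw [this, Matrix.mul_one]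

theorem Matrix.mul_mul_transpose_of_inv_eq (hJ : J * J = 1) (hA : IsUnit A.det)
    (h : A⁻¹ = J * Aᵀ * J) : A * J * Aᵀ = J := by
  have := mul_nonsing_inv A hA
  rw [h] at this
  calc A * J * Aᵀ = A * (J * Aᵀ * J) * J := by simp only [Matrix.mul_assoc, hJ, Matrix.mul_one]
    _ = J := by rw [this, Matrix.one_mul]

end

theorem transpose_mul_Imat_mul_apply_self (C : Matrix (Fin 3) (Fin 3) ℝ) (j : Fin 3) :
    (Cᵀ * Imat * C) j j = -C 0 j ^ 2 + C 1 j ^ 2 + C 2 j ^ 2 := by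
  simp [Imat, mul_apply, Fin.sum_univ_three]
  ring

theorem mul_Imat_mul_transpose_apply_self (C : Matrix (Fin 3) (Fin 3) ℝ) (i : Fin 3) :
    (C * Imat * Cᵀ) i i = -C i 0 ^ 2 + C i 1 ^ 2 + C i 2 ^ 2 := by
  simp [Imat, mul_apply, Fin.sum_univ_three]
  ring

theorem col_sq_of_transpose_mul_Imat_mul {C : Matrix (Fin 3) (Fin 3) ℝ} (h : Cᵀ * Imat * C = Imat)
    {j : Fin 3} (hj : j ≠ 0) : -C 0 j ^ 2 + C 1 j ^ 2 + C 2 j ^ 2 = 1 := by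
  rw [← transpose_mul_Imat_mul_apply_self, h]
  fin_cases j <;> simp_all [Imat]

theorem row_zero_sq_of_mul_Imat_mul_transpose {C : Matrix (Fin 3) (Fin 3) ℝ}
    (h : C * Imat * Cᵀ = Imat) : -C 0 0 ^ 2 + C 0 1 ^ 2 + C 0 2 ^ 2 = -1 := by
  rw [← mul_Imat_mul_transpose_apply_self, h]
  simp [Imat]

theorem minor_zero_zero_of_inv_eq {C : Matrix (Fin 3) (Fin 3) ℝ} (hdet : C.det = 1)
    (hinv : C⁻¹ = Imat * Cᵀ * Imat) : C 1 1 * C 2 2 - C 1 2 * C 2 1 = C 0 0 := by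
  have h := congrFun (congrFun (adjugate_eq_inv_of_det_eq_one hdet) 0) 0
  rw [hinv] at h
  simpa [adjugate_fin_three, Imat, mul_apply, Fin.sum_univ_three] using h

theorem stmt11 (C : Matrix (Fin 3) (Fin 3) ℝ) (hC : inSO21 C) :
    (C 1 1 + C 2 2) ^ 2 + (C 2 1 - C 1 2) ^ 2 = (1 + C 0 0) ^ 2 := by
  obtain ⟨hinv, hdet, -⟩ := hC
  have hunit : IsUnit C.det := hdet ▸ isUnit_one
  have hcol := transpose_mul_mul_self_of_inv_eq Imat_mul_Imat hunit hinv
  have hrow := mul_mul_transpose_of_inv_eq Imat_mul_Imat hunit hinv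
  linear_combination col_sq_of_transpose_mul_Imat_mul hcol (j := 1) (by decide) +
    col_sq_of_transpose_mul_Imat_mul hcol (j := 2) (by decide) +
    row_zero_sq_of_mul_Imat_mul_transpose hrow + 2 * minor_zero_zero_of_inv_eq hdet hinv
end

section
/- For β = 0 and any φ, t ∈ ℝ, the matrix exp(t(cos φ · a + sin φ · b)) is symmetric with (1,1)-entry cosh t; conversely, every symmetric matrix C with C⁻¹ = I Cᵀ I, det C = 1, and c₁₁ > 1 equals exp(t(cos φ · a + sin φ · b)) where cosh t = c₁₁, t > 0, cos φ = c₁₂/√(c₁₁²−1), sin φ = c₁₃/√(c₁₁²−1). -/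
set_option maxHeartbeats 1000000

open Matrix
lemma exp_formula (t φ : ℝ) :
    NormedSpace.exp (t • (Real.cos φ • amat + Real.sin φ • bmat)) =
    !![Real.cosh t, Real.cos φ * Real.sinh t, Real.sin φ * Real.sinh t;
       Real.cos φ * Real.sinh t, (Real.cos φ)^2 * Real.cosh t + (Real.sin φ)^2,
         Real.cos φ * Real.sin φ * (Real.cosh t - 1);
       Real.sin φ * Real.sinh t, Real.cos φ * Real.sin φ * (Real.cosh t - 1),
         (Real.sin φ)^2 * Real.cosh t + (Real.cos φ)^2] := by
  set c := Real.cos φ with hcdef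
  set s := Real.sin φ with hsdef
  have hc : c^2 + s^2 = 1 := by rw [hcdef, hsdef]; exact Real.cos_sq_add_sin_sq φ
  set P : Matrix (Fin 3) (Fin 3) ℝ := !![1,1,0; c,-c,-s; s,-s,c] with hP
  set Q : Matrix (Fin 3) (Fin 3) ℝ := !![1/2, c/2, s/2; 1/2, -c/2, -s/2; 0, -s, c] with hQ
  have hPQ : P * Q = 1 := by
    ext i j
    fin_cases i <;> fin_cases j <;>
      simp [hP, hQ, Matrix.mul_apply, Fin.sum_univ_three, Matrix.one_apply,
        Matrix.vecHead, Matrix.vecTail] <;>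
      first | rfl | linarith [hc]
  have hQP : Q * P = 1 := by
    ext i j
    fin_cases i <;> fin_cases j <;>
      simp [hP, hQ, Matrix.mul_apply, Fin.sum_univ_three, Matrix.one_apply,
        Matrix.vecHead, Matrix.vecTail] <;>
      first | rfl | linarith [hc]
  have hPunit : IsUnit P := ⟨⟨P, Q, hPQ, hQP⟩, rfl⟩
  have hPinv : P⁻¹ = Q := Matrix.inv_eq_right_inv hPQ
  have hD : (Matrix.diagonal ![t, -t, 0]) = !![t,0,0; 0,-t,0; 0,0,0] := by
    ext i j
    fin_cases i <;> fin_cases j <;>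
      simp [Matrix.diagonal_apply, Matrix.vecHead, Matrix.vecTail]
  have hED : Matrix.diagonal (NormedSpace.exp ![t, -t, 0])
      = !![Real.exp t, 0, 0; 0, Real.exp (-t), 0; 0, 0, 1] := by
    ext i j
    fin_cases i <;> fin_cases j <;>
      simp [Matrix.diagonal_apply, ← Real.exp_eq_exp_ℝ, Matrix.vecHead, Matrix.vecTail]
  have key : t • (c • amat + s • bmat) = P * Matrix.diagonal ![t, -t, 0] * P⁻¹ := by
    rw [hPinv, hD]
    ext i j
    fin_cases i <;> fin_cases j <;>
      simp [hP, hQ, amat, bmat, Matrix.mul_apply, Fin.sum_univ_three,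
        Matrix.vecHead, Matrix.vecTail] <;>
      first | rfl | ring
  rw [key, Matrix.exp_conj P _ hPunit, Matrix.exp_diagonal, hED, hPinv]
  ext i j
  fin_cases i <;> fin_cases j <;>
    simp [hP, hQ, Matrix.mul_apply, Fin.sum_univ_three, Real.cosh_eq, Real.sinh_eq,
      Matrix.vecHead, Matrix.vecTail] <;>
    first | rfl | ring

theorem stmt17 :
    (∀ t φ : ℝ,
      (NormedSpace.exp (t • (Real.cos φ • amat + Real.sin φ • bmat)))ᵀ
        = NormedSpace.exp (t • (Real.cos φ • amat + Real.sin φ • bmat)) ∧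
      NormedSpace.exp (t • (Real.cos φ • amat + Real.sin φ • bmat)) 0 0 = Real.cosh t) ∧
    (∀ C : Matrix (Fin 3) (Fin 3) ℝ, C⁻¹ = Imat * Cᵀ * Imat → C.det = 1 → Cᵀ = C →
      1 < C 0 0 → ∀ t φ : ℝ, 0 < t → Real.cosh t = C 0 0 →
      Real.cos φ = C 0 1 / Real.sqrt ((C 0 0) ^ 2 - 1) →
      Real.sin φ = C 0 2 / Real.sqrt ((C 0 0) ^ 2 - 1) →
      C = NormedSpace.exp (t • (Real.cos φ • amat + Real.sin φ • bmat))) := by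
  constructor
  · intro t φ
    rw [exp_formula]
    constructor
    · ext i j
      fin_cases i <;> fin_cases j <;>
        simp [Matrix.transpose_apply, Matrix.vecHead, Matrix.vecTail]
    · simp [Matrix.vecHead, Matrix.vecTail]
  intro C hCinv hdet hsymm hgt t φ ht hcosh hcos hsin
  have hI2 : Imat * Imat = 1 := by
    ext i j
    fin_cases i <;> fin_cases j <;>
      simp [Imat, Matrix.mul_apply, Fin.sum_univ_three, Matrix.diagonal_apply,
        Matrix.one_apply, Matrix.vecHead, Matrix.vecTail]
  have h1 : C * C⁻¹ = 1 := Matrix.mul_nonsing_inv C (by rw [hdet]; exact isUnit_one)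
  rw [hCinv] at h1
  have key : C * Imat * Cᵀ = Imat := by
    have h2 : C * (Imat * Cᵀ * Imat) * Imat = 1 * Imat := by rw [h1]
    rw [one_mul] at h2
    calc C * Imat * Cᵀ = C * Imat * Cᵀ * (Imat * Imat) := by rw [hI2, mul_one]
    _ = C * (Imat * Cᵀ * Imat) * Imat := by noncomm_ring
    _ = Imat := h2
  set c := Real.cos φ with hcdef
  set s := Real.sin φ with hsdef
  set ch := Real.cosh t with hchdef
  set sh := Real.sinh t with hshdef
  have hc : c^2 + s^2 = 1 := Real.cos_sq_add_sin_sq φ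
  have hsh : 0 < sh := by rw [hshdef]; exact Real.sinh_pos_iff.2 ht
  have hpyth : ch^2 - sh^2 = 1 := Real.cosh_sq_sub_sinh_sq t
  have hsq : Real.sqrt ((C 0 0)^2 - 1) = sh := by
    rw [← hcosh]
    have : ch^2 - 1 = sh^2 := by linarith
    rw [this, Real.sqrt_sq hsh.le]
  have hq : C 0 1 = c * sh := by
    rw [hcos, hsq, div_mul_cancel₀ _ (ne_of_gt hsh)]
  have hr : C 0 2 = s * sh := by
    rw [hsin, hsq, div_mul_cancel₀ _ (ne_of_gt hsh)]
  have hq' : C 1 0 = c * sh := by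
    have := congrFun (congrFun hsymm 0) 1
    simp [Matrix.transpose_apply] at this
    rw [this, hq]
  have hr' : C 2 0 = s * sh := by
    have := congrFun (congrFun hsymm 0) 2
    simp [Matrix.transpose_apply] at this
    rw [this, hr]
  have hv' : C 2 1 = C 1 2 := by
    have := congrFun (congrFun hsymm 1) 2
    simpa [Matrix.transpose_apply] using this
  set u := C 1 1 with hudef
  set v := C 1 2 with hvdef
  set w := C 2 2 with hwdef
  have hp : C 0 0 = ch := hcosh.symm
  have e01 : -(ch * (c * sh)) + (c * sh) * u + (s * sh) * v = 0 := by
    have := congrFun (congrFun key 0) 1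
    simp [Imat, Matrix.mul_apply, Fin.sum_univ_three, Matrix.diagonal_apply,
      Matrix.transpose_apply, Matrix.vecHead, Matrix.vecTail, hp, hq, hr, hq', hv'] at this
    linarith
  have e02 : -(ch * (s * sh)) + (c * sh) * v + (s * sh) * w = 0 := by
    have := congrFun (congrFun key 0) 2
    simp [Imat, Matrix.mul_apply, Fin.sum_univ_three, Matrix.diagonal_apply,
      Matrix.transpose_apply, Matrix.vecHead, Matrix.vecTail, hp, hq, hr, hr', hv'] at this
    linarith
  have hd : ch * (u * w - v * v) - (c*sh) * ((c*sh) * w - v * (s*sh))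
      + (s*sh) * ((c*sh) * v - u * (s*sh)) = 1 := by
    have := hdet
    rw [Matrix.det_fin_three] at this
    rw [hp, hq, hr, hq', hr', hv'] at this
    linarith [this]
  have L1 : c * u + s * v = c * ch := by
    apply mul_left_cancel₀ (ne_of_gt hsh)
    linear_combination e01
  have L2 : c * v + s * w = s * ch := by
    apply mul_left_cancel₀ (ne_of_gt hsh)
    linear_combination e02
  set du := u - (c^2*ch + s^2) with hdu0
  set dv := v - (c*s*(ch - 1)) with hdv0
  set dw := w - (s^2*ch + c^2) with hdw0
  set k := s^2*du - 2*c*s*dv + c^2*dw with hk0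
  have hA : c * du + s * dv = 0 := by
    rw [hdu0, hdv0]; linear_combination L1 - (c*ch) * hc
  have hB : c * dv + s * dw = 0 := by
    rw [hdv0, hdw0]; linear_combination L2 - (s*ch) * hc
  have hdu : du = k * s^2 := by
    rw [hk0]
    linear_combination (c*(2*s^2+c^2)) * hA - (c^2*s) * hB - (du*(c^2+s^2+1)) * hc
  have hdv : dv = -(k * c * s) := by
    rw [hk0]
    linear_combination (s^3) * hA + (c^3) * hB - (dv*(c^2+s^2+1)) * hc
  have hdw : dw = k * c^2 := by
    rw [hk0]
    linear_combination (-(c*s^2)) * hA + (s*(2*c^2+s^2)) * hB - (dw*(c^2+s^2+1)) * hc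
  have hu : u = c^2*ch + s^2 + k*s^2 := by linear_combination hdu - hdu0
  have hv : v = c*s*(ch-1) - k*c*s := by linear_combination hdv - hdv0
  have hw : w = s^2*ch + c^2 + k*c^2 := by linear_combination hdw - hdw0
  rw [hu, hv, hw] at hd
  have hk : k = 0 := by
    linear_combination hd - (1+k) * hpyth - ((1+k)*(ch^2-sh^2)*(c^2+s^2+1)) * hc
  rw [hk] at hu hv hw
  have Hu : u = c^2*ch + s^2 := by rw [hu]; ring
  have Hv : v = c*s*(ch - 1) := by rw [hv]; ring
  have Hw : w = s^2*ch + c^2 := by rw [hw]; ring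
  have Hv2 : C 2 1 = c*s*(ch - 1) := hv'.trans Hv
  rw [exp_formula]
  ext i j
  fin_cases i <;> fin_cases j <;>
    simp [Matrix.vecHead, Matrix.vecTail]
  · exact hp
  · exact hq
  · exact hr
  · exact hq'
  · exact Hu
  · exact Hv
  · exact hr'
  · exact Hv2
  · exact Hw
end
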